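/- Let G be a connected finite simple graph with a vertex u such that the subgraph induced by N(u) is a disjoint union of paths and d(u) ≥ 5. Let w ∈ V(G) \ N[u] with N(w) = {v₁, v₂}, where v₁ and v₂ are adjacent vertices in N(u) satisfying N(v_i) \ (N[u] ∪ {w}) = ∅ for i = 1, 2. Then q(G − v₁v₂ + uw) > q(G). -/

import Mathlib

open scoped Classical

namespace OuterplanarQ

/-- Signless Laplacian matrix Q(G) = D(G) + A(G). -/
noncomputable def qMatrix {V : Type*} [Fintype V] (G : SimpleGraph V) : Matrix V V ℝ :=
  fun i j => (if i = j then (G.degree i : ℝ) else 0) + (if G.Adj i j then 1 else 0)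

/-- The Q-index: the largest eigenvalue of Q(G). -/
noncomputable def qIndex {V : Type*} [Fintype V] (G : SimpleGraph V) : ℝ :=
  sSup {μ : ℝ | ∃ x : V → ℝ, x ≠ 0 ∧ (qMatrix G).mulVec x = μ • x}

/-- Outerplanar: one-page book embedding characterization, i.e. the vertices admit a
linear ordering (injection into ℝ) such that no two edges interleave. -/
def IsOuterplanar {V : Type*} (G : SimpleGraph V) : Prop :=
  ∃ f : V → ℝ, Function.Injective f ∧
    ∀ a b c d : V, G.Adj a b → G.Adj c d →
      ¬ (f a < f c ∧ f c < f b ∧ f b < f d)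

/-- `G` contains a copy of `F` as a subgraph. -/
def ContainsCopy {α β : Type*} (G : SimpleGraph α) (F : SimpleGraph β) : Prop :=
  ∃ f : β → α, Function.Injective f ∧ ∀ a b : β, F.Adj a b → G.Adj (f a) (f b)

/-- Disjoint union of `t` copies of the path on `k` vertices. -/
def pathUnion (t k : ℕ) : SimpleGraph (Fin t × Fin k) where
  Adj a b := a.1 = b.1 ∧ (SimpleGraph.pathGraph k).Adj a.2 b.2
  symm := ⟨fun _ _ h => ⟨h.1.symm, h.2.symm⟩⟩
  loopless := ⟨fun a h => (SimpleGraph.pathGraph k).loopless.irrefl a.2 h.2⟩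

/-- Disjoint union of two graphs. -/
def disjSum {α β : Type*} (G : SimpleGraph α) (H : SimpleGraph β) : SimpleGraph (α ⊕ β) where
  Adj a b := match a, b with
    | Sum.inl x, Sum.inl y => G.Adj x y
    | Sum.inr x, Sum.inr y => H.Adj x y
    | _, _ => False
  symm := ⟨by rintro (x|x) (y|y) h <;> simp_all <;> exact h.symm⟩
  loopless := ⟨by rintro (x|x) h <;> simp_all⟩

/-- The join `K₁ ∨ H` of a single vertex with `H`. -/
def cone {V : Type*} (H : SimpleGraph V) : SimpleGraph (Option V) where
  Adj a b := match a, b with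
    | none, none => False
    | none, some _ => True
    | some _, none => True
    | some x, some y => H.Adj x y
  symm := ⟨by rintro (_|x) (_|y) h <;> simp_all <;> exact h.symm⟩
  loopless := ⟨by rintro (_|x) h <;> simp_all⟩

/-- A disjoint union of paths: acyclic with maximum degree at most 2. -/
def IsLinearForest {V : Type*} [Fintype V] (G : SimpleGraph V) : Prop :=
  G.IsAcyclic ∧ ∀ v : V, G.degree v ≤ 2

/-- The closed neighbourhood `N[u]`. -/
def closedNbhd {V : Type*} (G : SimpleGraph V) (u : V) : Set V :=
  insert u (G.neighborSet u)

/-- The graph obtained from `G` by adding the edge `uv`. -/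
def addEdge {V : Type*} (G : SimpleGraph V) (u v : V) : SimpleGraph V :=
  G ⊔ SimpleGraph.fromEdgeSet {s(u, v)}

/-- The graph obtained from `G` by deleting the edge `uv`. -/
def delEdge {V : Type*} (G : SimpleGraph V) (u v : V) : SimpleGraph V :=
  G.deleteEdges {s(u, v)}

/-- η(u) = d(u) + (1/d(u)) · Σ_{v ∈ N(u)} d(v). -/
noncomputable def eta {V : Type*} [Fintype V] (G : SimpleGraph V) (u : V) : ℝ :=
  (G.degree u : ℝ) + (1 / (G.degree u : ℝ)) * ∑ v ∈ G.neighborFinset u, (G.degree v : ℝ)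

/-! The Perron vectors `x` of `Q(G)` and `y` of `Q(G')`, `G' = G - v₁v₂ + uw`, are positive, and
since `Q(G') = Q(G) - Q(v₁v₂) + Q(uw)`,
`(q(G') - q(G)) ⟨y, x⟩ = (y_u + y_w)(x_u + x_w) - (y_{v₁} + y_{v₂})(x_{v₁} + x_{v₂})`.
Because `G[N(u)]` is a linear forest, `v₁` and `v₂` have degree at most `4` and no common neighbour
in `N(u)`, so the eigenvalue equations at `u`, `w`, `v₁`, `v₂` bound `x_{v₁} + x_{v₂}` and
`y_{v₁} + y_{v₂}` in terms of `x_u + x_w` and `y_u + y_w`; these bounds make the right-hand side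
positive as soon as `q(G') ≤ q(G)`. -/

open Finset SimpleGraph Matrix

theorem _root_.Matrix.mem_spectrum_iff_exists_mulVec_eq_smul {n : Type*} [Fintype n]
    {A : Matrix n n ℝ} {μ : ℝ} :
    μ ∈ spectrum ℝ A ↔ ∃ x : n → ℝ, x ≠ 0 ∧ A *ᵥ x = μ • x := by
  rw [← Matrix.spectrum_toLin', ← Module.End.hasEigenvalue_iff_mem_spectrum]
  constructor
  · intro h
    obtain ⟨x, hx⟩ := h.exists_hasEigenvector
    exact ⟨x, hx.2, by simpa using Module.End.mem_eigenspace_iff.mp hx.1⟩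
  · rintro ⟨x, hx0, hx⟩
    exact Module.End.hasEigenvalue_of_hasEigenvector
      ⟨Module.End.mem_eigenspace_iff.mpr (by simpa using hx), hx0⟩

theorem _root_.Matrix.IsHermitian.posSemidef_smul_one_sub {n : Type*} [Fintype n]
    {A : Matrix n n ℝ} (hA : A.IsHermitian) {μ : ℝ} (hμ : ∀ ν ∈ spectrum ℝ A, ν ≤ μ) :
    (μ • 1 - A).PosSemidef := by
  refine Matrix.posSemidef_iff_isHermitian_and_spectrum_nonneg.mpr ⟨?_, ?_⟩
  · exact (isHermitian_one.smul (IsSelfAdjoint.all μ)).sub hA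
  · rw [← Algebra.algebraMap_eq_smul_one, ← spectrum.singleton_sub_eq]
    rintro _ ⟨_, rfl, ν, hν, rfl⟩
    exact sub_nonneg.mpr (hμ ν hν)

theorem _root_.Matrix.dotProduct_mulVec_le_abs {n : Type*} [Fintype n] {A : Matrix n n ℝ}
    (hA : ∀ i j, 0 ≤ A i j) (x : n → ℝ) :
    x ⬝ᵥ A *ᵥ x ≤ (fun i => |x i|) ⬝ᵥ A *ᵥ fun i => |x i| := by
  simp only [dotProduct, mulVec, Finset.mul_sum]
  refine Finset.sum_le_sum fun i _ => Finset.sum_le_sum fun j _ => ?_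
  calc x i * (A i j * x j) ≤ |x i * (A i j * x j)| := le_abs_self _
    _ = |x i| * (A i j * |x j|) := by rw [abs_mul, abs_mul, abs_of_nonneg (hA i j)]

theorem _root_.Matrix.IsHermitian.exists_nonneg_mulVec_eq_sSup_spectrum_smul {n : Type*}
    [Fintype n] [Nonempty n] {A : Matrix n n ℝ} (hA : A.IsHermitian) (hA0 : ∀ i j, 0 ≤ A i j) :
    ∃ x : n → ℝ, x ≠ 0 ∧ 0 ≤ x ∧ A *ᵥ x = sSup (spectrum ℝ A) • x := by
  set ρ := sSup (spectrum ℝ A)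
  have hfin := Matrix.finite_spectrum A
  have hρ : ρ ∈ spectrum ℝ A :=
    Set.Nonempty.csSup_mem ⟨_, hA.eigenvalues_mem_spectrum_real (Classical.arbitrary n)⟩ hfin
  have hB := hA.posSemidef_smul_one_sub fun ν hν => le_csSup hfin.bddAbove hν
  obtain ⟨x, hx0, hx⟩ := mem_spectrum_iff_exists_mulVec_eq_smul.mp hρ
  -- `|x|` also attains the Rayleigh maximum `ρ`, so it lies in the kernel of `ρ • 1 - A ≥ 0`.
  set y : n → ℝ := fun i => |x i|
  have hyy : y ⬝ᵥ y = x ⬝ᵥ x := Finset.sum_congr rfl fun i _ => abs_mul_abs_self (x i)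
  have hBy : y ⬝ᵥ (ρ • 1 - A) *ᵥ y = 0 := by
    refine le_antisymm ?_ (hB.dotProduct_mulVec_nonneg y)
    have hxAx : x ⬝ᵥ A *ᵥ x = ρ * (x ⬝ᵥ x) := by rw [hx, dotProduct_smul, smul_eq_mul]
    rw [sub_mulVec, smul_mulVec, one_mulVec, dotProduct_sub, dotProduct_smul, smul_eq_mul,
      hyy]
    linarith [dotProduct_mulVec_le_abs hA0 x]
  have hy : (ρ • 1 - A) *ᵥ y = 0 := (hB.dotProduct_mulVec_zero_iff y).mp hBy
  refine ⟨y, fun h => hx0 (funext fun i => abs_eq_zero.mp (congrFun h i)), fun i => abs_nonneg _, ?_⟩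
  rw [sub_mulVec, smul_mulVec, one_mulVec, sub_eq_zero] at hy
  exact hy.symm

section SignlessLaplacian

variable {V : Type*} [Fintype V]

theorem qMatrix_isHermitian (G : SimpleGraph V) : (qMatrix G).IsHermitian := by
  ext i j
  by_cases h : i = j
  · simp [h]
  · simp [qMatrix, h, Ne.symm h, G.adj_comm]

theorem qMatrix_nonneg (G : SimpleGraph V) (i j : V) : 0 ≤ qMatrix G i j := by
  unfold qMatrix
  positivity

theorem mulVec_qMatrix_apply (G : SimpleGraph V) (x : V → ℝ) (v : V) :
    (qMatrix G *ᵥ x) v = G.degree v * x v + ∑ z ∈ G.neighborFinset v, x z := by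
  simp only [qMatrix, mulVec, dotProduct, add_mul, Finset.sum_add_distrib, ite_mul, one_mul,
    zero_mul, Finset.sum_ite_eq, Finset.mem_univ, if_true, ← Finset.sum_filter,
    neighborFinset_eq_filter]

theorem qIndex_eq_sSup_spectrum (G : SimpleGraph V) :
    qIndex G = sSup (spectrum ℝ (qMatrix G)) := by
  simp only [qIndex, ← mem_spectrum_iff_exists_mulVec_eq_smul, Set.ofPred_mem_eq]

theorem pos_of_nonneg_eigenvector {G : SimpleGraph V} (hG : G.Connected) {q : ℝ} {x : V → ℝ}
    (hx0 : x ≠ 0) (hx : 0 ≤ x) (hxq : qMatrix G *ᵥ x = q • x) (v : V) : 0 < x v := by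
  have hzero : ∀ a b, G.Adj a b → x a = 0 → x b = 0 := fun a b hab ha => by
    have h := congrFun hxq a
    rw [mulVec_qMatrix_apply, ha, Pi.smul_apply, ha, smul_zero, mul_zero, zero_add] at h
    exact (Finset.sum_eq_zero_iff_of_nonneg fun z _ => hx z).mp h b (by simpa using hab)
  have hwalk : ∀ a b, G.Walk a b → x a = 0 → x b = 0 := fun a b p => by
    induction p with
    | nil => exact id
    | cons hab _ ih => exact ih ∘ hzero _ _ hab
  obtain ⟨c, hc⟩ := Function.ne_iff.mp hx0
  exact (hx v).lt_of_ne fun hv => hc (hwalk v c (hG v c).some hv.symm)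

theorem exists_pos_eigenvector_qIndex {G : SimpleGraph V} (hG : G.Connected) :
    ∃ x : V → ℝ, (∀ v, 0 < x v) ∧ qMatrix G *ᵥ x = qIndex G • x := by
  have := hG.nonempty
  obtain ⟨x, hx0, hx, hxq⟩ :=
    (qMatrix_isHermitian G).exists_nonneg_mulVec_eq_sSup_spectrum_smul (qMatrix_nonneg G)
  rw [← qIndex_eq_sSup_spectrum] at hxq
  exact ⟨x, pos_of_nonneg_eigenvector hG hx0 hx hxq, hxq⟩

theorem qMatrix_sup_of_disjoint {H K : SimpleGraph V} (h : Disjoint H K) :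
    qMatrix (H ⊔ K) = qMatrix H + qMatrix K := by
  ext i j
  -- Quantified over the instance: the one inside `qMatrix` is not the one found for `H ⊔ K`.
  have hdeg : ∀ inst, @degree V (H ⊔ K) i inst = H.degree i + K.degree i := fun _ => by
    rw [← card_neighborFinset_eq_degree, neighborFinset_sup_of_disjoint i h,
      Finset.card_disjUnion, card_neighborFinset_eq_degree, card_neighborFinset_eq_degree]
  have hadj : ¬(H.Adj i j ∧ K.Adj i j) := fun ⟨hH, hK⟩ => h.le_bot ⟨hH, hK⟩
  simp only [qMatrix, Matrix.add_apply, sup_adj, hdeg]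
  split_ifs <;> simp_all

theorem mulVec_qMatrix_edge {a b : V} (hab : a ≠ b) (z : V → ℝ) :
    qMatrix (edge a b) *ᵥ z = Pi.single a (z a + z b) + Pi.single b (z a + z b) := by
  ext v
  have hN : ∀ inst, @neighborFinset V (edge a b) v inst =
      if v = a then {b} else if v = b then {a} else ∅ := fun _ => by
    ext t
    simp only [mem_neighborFinset, edge_adj]
    split_ifs <;> grind
  rw [mulVec_qMatrix_apply, ← card_neighborFinset_eq_degree, hN]
  split_ifs with ha hb <;> simp [*, Ne.symm hab, add_comm]

theorem qMatrix_addEdge_delEdge {G : SimpleGraph V} {a b c d : V} (hab : G.Adj a b)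
    (hcd : ¬G.Adj c d) :
    qMatrix (addEdge (delEdge G a b) c d) = qMatrix G - qMatrix (edge a b) + qMatrix (edge c d) := by
  have hG : qMatrix G = qMatrix (G \ edge a b) + qMatrix (edge a b) := by
    rw [← qMatrix_sup_of_disjoint disjoint_sdiff_self_left,
      sdiff_sup_cancel ((edge_le_iff G).mpr (Or.inr hab))]
  have hG' : qMatrix (addEdge (delEdge G a b) c d) = qMatrix (G \ edge a b) + qMatrix (edge c d) :=
    qMatrix_sup_of_disjoint ((disjoint_edge _).mpr fun h => hcd ((sdiff_le : G \ edge a b ≤ G) h))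
  rw [hG', hG]
  abel

end SignlessLaplacian

theorem connected_addEdge_delEdge {V : Type*} {G : SimpleGraph V} (hG : G.Connected) {a b c : V}
    (hca : G.Adj c a) (hcb : G.Adj c b) (s t : V) : (addEdge (delEdge G a b) s t).Connected := by
  refine Connected.mono le_sup_left (hG.connected_delete_edge_of_not_isBridge ?_)
  rw [isBridge_iff, not_not]
  have hac' : (G.deleteEdges {s(a, b)}).Adj a c := by
    simp [hca.symm, hca.ne, hcb.ne]
  have hcb' : (G.deleteEdges {s(a, b)}).Adj c b := by
    simp [hcb, hca.ne, hcb.ne]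
  exact hac'.reachable.trans hcb'.reachable

theorem _root_.Finset.sum_insert_le_add_of_nonneg {ι : Type*} [DecidableEq ι] {s : Finset ι}
    {f : ι → ℝ} {a : ι} (ha : 0 ≤ f a) : ∑ i ∈ insert a s, f i ≤ f a + ∑ i ∈ s, f i := by
  by_cases h : a ∈ s
  · rw [Finset.insert_eq_of_mem h]
    linarith
  · rw [Finset.sum_insert h]

section LocalStructure

variable {V : Type*} [Fintype V] {G : SimpleGraph V} {u w v v₁ v₂ : V}

theorem neighborFinset_subset_of_diff_eq_empty
    (h : G.neighborSet v \ (closedNbhd G u ∪ {w}) = ∅) :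
    G.neighborFinset v ⊆ insert u (insert w (G.neighborFinset v ∩ G.neighborFinset u)) := by
  intro t ht
  have hvt := (mem_neighborFinset _ _ _).mp ht
  have := Set.sdiff_eq_empty.mp h hvt
  simp only [closedNbhd, Set.mem_union, Set.mem_insert_iff, mem_neighborSet,
    Set.mem_singleton_iff] at this
  simp only [Finset.mem_insert, Finset.mem_inter, mem_neighborFinset]
  tauto

theorem card_neighborFinset_inter_le_two (hlin : IsLinearForest (G.induce (G.neighborSet u)))
    (hv : v ∈ G.neighborSet u) : #(G.neighborFinset v ∩ G.neighborFinset u) ≤ 2 := by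
  let H := G.induce (G.neighborSet u)
  calc #(G.neighborFinset v ∩ G.neighborFinset u)
      ≤ #((H.neighborFinset ⟨v, hv⟩).image Subtype.val) := by
        refine Finset.card_le_card fun t ht => ?_
        rw [Finset.mem_inter, mem_neighborFinset, mem_neighborFinset] at ht
        exact Finset.mem_image.mpr ⟨⟨t, ht.2⟩, (mem_neighborFinset _ _ _).mpr ht.1, rfl⟩
    _ ≤ H.degree ⟨v, hv⟩ := by
        rw [← card_neighborFinset_eq_degree]
        exact Finset.card_image_le
    _ ≤ 2 := hlin.2 _

theorem degree_le_four (hlin : IsLinearForest (G.induce (G.neighborSet u)))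
    (hv : v ∈ G.neighborSet u) (h : G.neighborSet v \ (closedNbhd G u ∪ {w}) = ∅) :
    G.degree v ≤ 4 := by
  rw [← card_neighborFinset_eq_degree]
  calc #(G.neighborFinset v)
      ≤ #(insert u (insert w (G.neighborFinset v ∩ G.neighborFinset u))) :=
        Finset.card_le_card (neighborFinset_subset_of_diff_eq_empty h)
    _ ≤ #(G.neighborFinset v ∩ G.neighborFinset u) + 2 :=
        (Finset.card_insert_le _ _).trans (Nat.succ_le_succ (Finset.card_insert_le _ _))
    _ ≤ 4 := by linarith [card_neighborFinset_inter_le_two hlin hv]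

theorem disjoint_neighborFinset_inter_of_adj (hlin : IsLinearForest (G.induce (G.neighborSet u)))
    (hv₁ : v₁ ∈ G.neighborSet u) (hv₂ : v₂ ∈ G.neighborSet u) (hadj : G.Adj v₁ v₂) :
    Disjoint (G.neighborFinset v₁ ∩ G.neighborFinset u)
      (G.neighborFinset v₂ ∩ G.neighborFinset u) := by
  refine Finset.disjoint_left.mpr fun p hp₁ hp₂ => ?_
  simp only [Finset.mem_inter, mem_neighborFinset] at hp₁ hp₂
  have htriangle : (G.induce (G.neighborSet u)).IsNClique 3 {⟨v₁, hv₁⟩, ⟨v₂, hv₂⟩, ⟨p, hp₁.2⟩} :=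
    is3Clique_triple_iff.mpr ⟨hadj, hp₁.1, hp₂.1⟩
  exact hlin.1.cliqueFree le_rfl _ htriangle

theorem sum_neighborFinset_le (h : G.neighborSet v \ (closedNbhd G u ∪ {w}) = ∅)
    {z : V → ℝ} (hz : 0 ≤ z) :
    ∑ t ∈ G.neighborFinset v, z t ≤ z u + z w + ∑ t ∈ G.neighborFinset v ∩ G.neighborFinset u, z t :=
  calc ∑ t ∈ G.neighborFinset v, z t
      ≤ ∑ t ∈ insert u (insert w (G.neighborFinset v ∩ G.neighborFinset u)), z t :=
        Finset.sum_le_sum_of_subset_of_nonneg (neighborFinset_subset_of_diff_eq_empty h)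
          fun t _ _ => hz t
    _ ≤ z u + z w + ∑ t ∈ G.neighborFinset v ∩ G.neighborFinset u, z t := by
        grw [sum_insert_le_add_of_nonneg (hz u), sum_insert_le_add_of_nonneg (hz w), add_assoc]

theorem sum_neighborFinset_add_sum_le (hlin : IsLinearForest (G.induce (G.neighborSet u)))
    (hv₁ : v₁ ∈ G.neighborSet u) (hv₂ : v₂ ∈ G.neighborSet u) (hadj : G.Adj v₁ v₂)
    (h₁ : G.neighborSet v₁ \ (closedNbhd G u ∪ {w}) = ∅)
    (h₂ : G.neighborSet v₂ \ (closedNbhd G u ∪ {w}) = ∅) {z : V → ℝ} (hz : 0 ≤ z) :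
    ∑ t ∈ G.neighborFinset v₁, z t + ∑ t ∈ G.neighborFinset v₂, z t ≤
      2 * (z u + z w) + ∑ t ∈ G.neighborFinset u, z t := by
  have hcommon : ∑ t ∈ G.neighborFinset v₁ ∩ G.neighborFinset u, z t +
      ∑ t ∈ G.neighborFinset v₂ ∩ G.neighborFinset u, z t ≤ ∑ t ∈ G.neighborFinset u, z t := by
    rw [← Finset.sum_union (disjoint_neighborFinset_inter_of_adj hlin hv₁ hv₂ hadj)]
    exact Finset.sum_le_sum_of_subset_of_nonneg
      (Finset.union_subset Finset.inter_subset_right Finset.inter_subset_right) fun t _ _ => hz t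
  linarith [sum_neighborFinset_le h₁ hz, sum_neighborFinset_le h₂ hz]

end LocalStructure

section Eigenvectors

variable {V : Type*} [Fintype V] {G : SimpleGraph V} {u w v₁ v₂ : V}

theorem dotProduct_mulVec_qMatrix_comm (G : SimpleGraph V) (x y : V → ℝ) :
    x ⬝ᵥ qMatrix G *ᵥ y = y ⬝ᵥ qMatrix G *ᵥ x := by
  rw [dotProduct_mulVec, ← mulVec_transpose, dotProduct_comm,
    ← conjTranspose_eq_transpose_of_trivial, (qMatrix_isHermitian G).eq]

theorem sub_mul_dotProduct_eq {a b c d : V} (hab : a ≠ b) (hcd : c ≠ d) {x y : V → ℝ} {q q' : ℝ}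
    (hxq : qMatrix G *ᵥ x = q • x)
    (hyq : (qMatrix G - qMatrix (edge a b) + qMatrix (edge c d)) *ᵥ y = q' • y) :
    (q' - q) * (y ⬝ᵥ x) = (y c + y d) * (x c + x d) - (y a + y b) * (x a + x b) := by
  have h := congrArg (x ⬝ᵥ ·) hyq
  simp only [add_mulVec, sub_mulVec, dotProduct_add, dotProduct_sub, dotProduct_smul,
    dotProduct_mulVec_qMatrix_comm G x y, hxq, mulVec_qMatrix_edge hab,
    mulVec_qMatrix_edge hcd, dotProduct_single, smul_eq_mul] at h
  rw [dotProduct_comm x y] at h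
  linear_combination -h

theorem sub_two_mul_eq_of_eigenvector {x : V → ℝ} {q : ℝ} (hxq : qMatrix G *ᵥ x = q • x)
    (hNw : G.neighborSet w = {v₁, v₂}) (h₁₂ : v₁ ≠ v₂) : (q - 2) * x w = x v₁ + x v₂ := by
  have hN : G.neighborFinset w = {v₁, v₂} := by
    ext t
    simp [← mem_neighborSet, hNw]
  have h := congrFun hxq w
  rw [mulVec_qMatrix_apply, ← card_neighborFinset_eq_degree, hN, Finset.card_pair h₁₂,
    Finset.sum_pair h₁₂] at h
  simp only [Pi.smul_apply, smul_eq_mul] at h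
  push_cast at h
  linarith

theorem sub_four_mul_le_of_eigenvector {x : V → ℝ} {q : ℝ} (hxq : qMatrix G *ᵥ x = q • x)
    (hx : 0 ≤ x) (hdu : 5 ≤ G.degree u) (hd₁ : G.degree v₁ ≤ 4) (hd₂ : G.degree v₂ ≤ 4)
    (hsum : ∑ t ∈ G.neighborFinset v₁, x t + ∑ t ∈ G.neighborFinset v₂, x t ≤
      2 * (x u + x w) + ∑ t ∈ G.neighborFinset u, x t) :
    (q - 4) * (x v₁ + x v₂) ≤ (q - 3) * x u + 2 * x w := by
  have heq : ∀ v, G.degree v * x v + ∑ t ∈ G.neighborFinset v, x t = q * x v := fun v => by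
    simpa [mulVec_qMatrix_apply] using congrFun hxq v
  have hdu' : (5 : ℝ) ≤ G.degree u := by exact_mod_cast hdu
  have hd₁' : (G.degree v₁ : ℝ) ≤ 4 := by exact_mod_cast hd₁
  have hd₂' : (G.degree v₂ : ℝ) ≤ 4 := by exact_mod_cast hd₂
  linarith [heq u, heq v₁, heq v₂, mul_le_mul_of_nonneg_right hdu' (hx u),
    mul_le_mul_of_nonneg_right hd₁' (hx v₁), mul_le_mul_of_nonneg_right hd₂' (hx v₂)]

theorem six_le_and_sub_two_mul_le_of_eigenvector {y : V → ℝ} {q' : ℝ}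
    (hyq : (qMatrix G - qMatrix (edge v₁ v₂) + qMatrix (edge u w)) *ᵥ y = q' • y)
    (hy : 0 ≤ y) (hyu : 0 < y u) (hu₁ : u ≠ v₁) (hu₂ : u ≠ v₂) (hw₁ : w ≠ v₁) (hw₂ : w ≠ v₂) (huw : u ≠ w)
    (h₁₂ : v₁ ≠ v₂) (hdu : 5 ≤ G.degree u) (hd₁ : G.degree v₁ ≤ 4) (hd₂ : G.degree v₂ ≤ 4)
    (hsum : ∑ t ∈ G.neighborFinset v₁, y t + ∑ t ∈ G.neighborFinset v₂, y t ≤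
      2 * (y u + y w) + ∑ t ∈ G.neighborFinset u, y t) :
    6 ≤ q' ∧ (q' - 2) * (y v₁ + y v₂) ≤ (q' - 4) * y u + y w := by
  have heq (v : V) := congrFun hyq v
  simp only [add_mulVec, sub_mulVec, Pi.add_apply, Pi.sub_apply, Pi.smul_apply, smul_eq_mul,
    mulVec_qMatrix_apply, mulVec_qMatrix_edge h₁₂, mulVec_qMatrix_edge huw, Pi.single_apply] at heq
  have hu := heq u
  have h₁ := heq v₁
  have h₂ := heq v₂
  simp only [hu₁, hu₂, huw, hw₁.symm, hw₂.symm, hu₁.symm, hu₂.symm, h₁₂, h₁₂.symm, if_true,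
    if_false, add_zero, zero_add, sub_zero] at hu h₁ h₂
  have hdu' : (5 : ℝ) ≤ G.degree u := by exact_mod_cast hdu
  have hd₁' : (G.degree v₁ : ℝ) ≤ 4 := by exact_mod_cast hd₁
  have hd₂' : (G.degree v₂ : ℝ) ≤ 4 := by exact_mod_cast hd₂
  have hN : 0 ≤ ∑ t ∈ G.neighborFinset u, y t := Finset.sum_nonneg fun t _ => hy t
  constructor
  · refine le_of_mul_le_mul_right ?_ hyu
    linarith [mul_le_mul_of_nonneg_right hdu' (hy u), show 0 ≤ y w from hy w]
  · linarith [mul_le_mul_of_nonneg_right hdu' (hy u), mul_le_mul_of_nonneg_right hd₁' (hy v₁),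
      mul_le_mul_of_nonneg_right hd₂' (hy v₂)]

end Eigenvectors

theorem mul_lt_mul_of_eigenvector_bounds {q q' xu xw S yu yw T : ℝ} (hS : 0 < S) (hT : 0 < T)
    (hyw : 0 ≤ yw) (hq' : 6 ≤ q') (hle : q' ≤ q)
    (hx : (q - 4) * S ≤ (q - 3) * xu + 2 * xw) (hw : (q - 2) * xw = S)
    (hy : (q' - 2) * T ≤ (q' - 4) * yu + yw) : S * T < (xu + xw) * (yu + yw) := by
  have hxw : 0 ≤ xw := by nlinarith
  have hxS : (q ^ 2 - 5 * q + 3) * S ≤ (q - 3) * (q - 2) * (xu + xw) := by nlinarith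
  have hyT : (q' - 2) * T ≤ (q' - 4) * (yu + yw) := by nlinarith
  have hcoef : (q - 3) * (q - 2) * (q' - 4) < (q ^ 2 - 5 * q + 3) * (q' - 2) := by nlinarith
  by_contra! h
  have := calc (q ^ 2 - 5 * q + 3) * (q' - 2) * (S * T)
      = ((q ^ 2 - 5 * q + 3) * S) * ((q' - 2) * T) := by ring
    _ ≤ ((q - 3) * (q - 2) * (xu + xw)) * ((q' - 4) * (yu + yw)) :=
        mul_le_mul hxS hyT (by nlinarith) (by nlinarith)
    _ = (q - 3) * (q - 2) * (q' - 4) * ((xu + xw) * (yu + yw)) := by ring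
    _ ≤ (q - 3) * (q - 2) * (q' - 4) * (S * T) :=
        mul_le_mul_of_nonneg_left h (by nlinarith)
  exact this.not_gt (mul_lt_mul_of_pos_right hcoef (mul_pos hS hT))

theorem qIndex_lt_delete_add_general
    {V : Type*} [Fintype V] (G : SimpleGraph V) (hconn : G.Connected)
    (u : V) (hlin : IsLinearForest (G.induce (G.neighborSet u))) (hdu : 5 ≤ G.degree u)
    (w v₁ v₂ : V) (hw : w ∉ closedNbhd G u)
    (hNw : G.neighborSet w = {v₁, v₂})
    (hv₁ : v₁ ∈ G.neighborSet u) (hv₂ : v₂ ∈ G.neighborSet u) (hadj : G.Adj v₁ v₂)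
    (h₁ : G.neighborSet v₁ \ (closedNbhd G u ∪ {w}) = ∅)
    (h₂ : G.neighborSet v₂ \ (closedNbhd G u ∪ {w}) = ∅) :
    qIndex G < qIndex (addEdge (delEdge G v₁ v₂) u w) := by
  have := hconn.nonempty
  have hu₁ : G.Adj u v₁ := hv₁
  have hu₂ : G.Adj u v₂ := hv₂
  have hw₁ : G.Adj w v₁ := by simp [← mem_neighborSet, hNw]
  have hw₂ : G.Adj w v₂ := by simp [← mem_neighborSet, hNw]
  have huw : u ≠ w := fun h => hw (h ▸ Set.mem_insert u _)
  have hnadj : ¬G.Adj u w := fun h => hw (Set.mem_insert_of_mem u h)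
  have hd₁ := degree_le_four hlin hv₁ h₁
  have hd₂ := degree_le_four hlin hv₂ h₂
  have hsum {z : V → ℝ} (hz : 0 ≤ z) := sum_neighborFinset_add_sum_le hlin hv₁ hv₂ hadj h₁ h₂ hz
  obtain ⟨x, hx, hxq⟩ := exists_pos_eigenvector_qIndex hconn
  obtain ⟨y, hy, hyq⟩ := exists_pos_eigenvector_qIndex (connected_addEdge_delEdge hconn hu₁ hu₂ u w)
  rw [qMatrix_addEdge_delEdge hadj hnadj] at hyq
  obtain ⟨hq', hyT⟩ := six_le_and_sub_two_mul_le_of_eigenvector hyq (fun v => (hy v).le) (hy u)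
    hu₁.ne hu₂.ne hw₁.ne hw₂.ne huw hadj.ne hdu hd₁ hd₂ (hsum fun v => (hy v).le)
  have hxS := sub_four_mul_le_of_eigenvector hxq (fun v => (hx v).le) hdu hd₁ hd₂
    (hsum fun v => (hx v).le)
  by_contra! hle
  have hST := mul_lt_mul_of_eigenvector_bounds (add_pos (hx v₁) (hx v₂))
    (add_pos (hy v₁) (hy v₂)) (hy w).le hq' hle hxS
    (sub_two_mul_eq_of_eigenvector hxq hNw hadj.ne) hyT
  have hyx : 0 < y ⬝ᵥ x := Finset.sum_pos (fun v _ => mul_pos (hy v) (hx v)) Finset.univ_nonempty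
  nlinarith [sub_mul_dotProduct_eq hadj.ne huw hxq hyq]

/-- Lemma 2.8 of the paper: if `G[N(u)]` is a disjoint union of paths, `d(u) ≥ 5`,
`w ∉ N[u]` with `N(w) = {v₁, v₂}` where `v₁ v₂` is an edge of `G[N(u)]` and
`N(vᵢ) \ (N[u] ∪ {w}) = ∅` for `i = 1, 2`, then `q(G - v₁v₂ + uw) > q(G)`. -/
theorem qIndex_lt_delete_add
    {V : Type*} [Fintype V] (G : SimpleGraph V) (hconn : G.Connected)
    (u : V) (hlin : IsLinearForest (G.induce (G.neighborSet u))) (hdu : 5 ≤ G.degree u)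
    (w v₁ v₂ : V) (hw : w ∉ closedNbhd G u) (hv₁₂ : v₁ ≠ v₂)
    (hNw : G.neighborSet w = {v₁, v₂})
    (hv₁ : v₁ ∈ G.neighborSet u) (hv₂ : v₂ ∈ G.neighborSet u) (hadj : G.Adj v₁ v₂)
    (h₁ : G.neighborSet v₁ \ (closedNbhd G u ∪ {w}) = ∅)
    (h₂ : G.neighborSet v₂ \ (closedNbhd G u ∪ {w}) = ∅) :
    qIndex G < qIndex (addEdge (delEdge G v₁ v₂) u w) :=
  qIndex_lt_delete_add_general G hconn u hlin hdu w v₁ v₂ hw hNw hv₁ hv₂ hadj h₁ h₂
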